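/- arXiv:math/0606379 — 3 statements merged into one kernel-verified Lean document; each statement's English description precedes it below -/
import Mathlib

section
/- Let G be a group and a, b ∈ G satisfy the braid relation a*b*a = b*a*b. Then for every integer n, the element (b*a*b)⁻¹*a^n is conjugate in G to b⁻¹*a^(n-2). -/
theorem stmt_3 {G : Type*} [Group G] (a b : G) (h : a * b * a = b * a * b) (n : ℤ) :
    IsConj ((b * a * b)⁻¹ * a ^ n) (b⁻¹ * a ^ (n - 2)) := by
  refine isConj_iff.mpr ⟨a, ?_⟩
  rw [← h]
  group
end

section
/- Let k, n, p, q be integers with n odd, k = 5, 3k + n = p + q + 1, and |n + 2| = |2pq + p + q|. Then pq = -6 and p + q is odd, so n ∈ {-13, -15, -19, -9}. -/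
/-!
Substituting `n = p + q - 14`, the equation `|n + 2| = |2pq + p + q|` leaves two cases:
`pq = -6`, or `pq + p + q = 6`, i.e. `(p + 1)(q + 1) = 7`. Since `n` is odd, `p + q` is odd, so
`pq` is even and `pq + p + q` is odd, which rules out the second case. The factorisations of `-6`
then give `p + q ∈ {-5, -1, 1, 5}`.
-/

namespace Int

theorem odd_mul_add_add_of_odd_add {p q : ℤ} (h : Odd (p + q)) : Odd (p * q + p + q) := by
  have hmul : Even (p * q) := by
    rcases Int.even_or_odd p with hp | hp
    · exact hp.mul_right q
    · exact (Int.odd_add.mp h |>.mp hp).mul_left p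
  rw [add_assoc]
  exact hmul.add_odd h

theorem add_mem_of_mul_eq_neg_six {p q : ℤ} (h : p * q = -6) :
    p + q ∈ ({-5, -1, 1, 5} : Set ℤ) := by
  have hdvd : p ∣ 6 := ⟨-q, by linarith⟩
  have hle : p ≤ 6 := Int.le_of_dvd (by norm_num) hdvd
  have hge : -6 ≤ p := by linarith [Int.le_of_dvd (by norm_num) (neg_dvd.mpr hdvd)]
  simp only [Set.mem_insert_iff, Set.mem_singleton_iff]
  interval_cases p <;> omega

end Int

theorem stmt_17 (k n p q : ℤ) (hn : Odd n) (hk : k = 5)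
    (h1 : 3 * k + n = p + q + 1) (h2 : |n + 2| = |2 * p * q + p + q|) :
    p * q = -6 ∧ Odd (p + q) ∧ n ∈ ({-13, -15, -19, -9} : Set ℤ) := by
  subst hk
  have hsum : Odd (p + q) := by
    rw [show p + q = n + 14 by linarith]
    exact hn.add_even (by decide)
  have hpq : p * q = -6 := by
    rcases abs_eq_abs.mp h2 with h | h
    · linarith
    · have h7 : p * q + p + q = 6 := by linarith
      have hodd := Int.odd_mul_add_add_of_odd_add hsum
      rw [h7] at hodd
      exact absurd hodd (by decide)
  refine ⟨hpq, hsum, ?_⟩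
  have hmem := Int.add_mem_of_mul_eq_neg_six hpq
  simp only [Set.mem_insert_iff, Set.mem_singleton_iff] at hmem ⊢
  omega
end

section
/- Let k, n, p, q be integers with n odd, k = -3, 3k + n = p + q + 1, and |n + 2| = |2pq + p + q|. Then pq = 6 and p + q is odd, so n ∈ {15, 5, 17, 3}. -/
theorem Int.even_add_one_mul_add_one_of_odd_add {p q : ℤ} (h : Odd (p + q)) :
    Even ((p + 1) * (q + 1)) := by
  rw [Int.odd_add, ← Int.not_even_iff_odd] at h
  rw [Int.even_mul, Int.even_add_one, Int.even_add_one]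
  tauto

theorem Int.add_mem_of_mul_eq_six {p q : ℤ} (h : p * q = 6) :
    p + q ∈ ({7, 5, -7, -5} : Set ℤ) := by
  have hp : |p| ≤ 6 := by
    simpa using Int.le_of_dvd (by norm_num) ((abs_dvd p 6).mpr ⟨q, h.symm⟩)
  obtain ⟨hp₁, hp₂⟩ := abs_le.mp hp
  simp only [Set.mem_insert_iff, Set.mem_singleton_iff]
  interval_cases p <;> omega

theorem stmt_18 (k n p q : ℤ) (hn : Odd n) (hk : k = -3)
    (h1 : 3 * k + n = p + q + 1) (h2 : |n + 2| = |2 * p * q + p + q|) :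
    p * q = 6 ∧ Odd (p + q) ∧ n ∈ ({15, 5, 17, 3} : Set ℤ) := by
  subst hk
  have hn_eq : n = p + q + 10 := by linarith
  have hodd : Odd (p + q) := by
    obtain ⟨m, hm⟩ := hn
    exact ⟨m - 5, by omega⟩
  have hpq : p * q = 6 := by
    rcases abs_eq_abs.mp h2 with h | h
    · linarith
    · -- `(p + 1) * (q + 1) = -5` is odd, but opposite parities make one factor even
      have h5 : (p + 1) * (q + 1) = -5 := by linarith
      have := Int.even_add_one_mul_add_one_of_odd_add hodd
      rw [h5] at this
      exact absurd this (by decide)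
  refine ⟨hpq, hodd, ?_⟩
  have hsum := Int.add_mem_of_mul_eq_six hpq
  simp only [Set.mem_insert_iff, Set.mem_singleton_iff] at hsum ⊢
  omega
end
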